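/- Let a, b : ℤ → ℂ be finitely supported functions and set A(x) = Σ_{n∈ℤ} a(n) e^{2πinx} and B(x) = Σ_{m∈ℤ} b(m) e^{−2πimx}. Let 𝒬 be a finite nonempty set of positive integers, δ > 0, and let Ĩ_{𝒬,δ} be the Jutila approximant. Then Σ_{n∈ℤ} a(n) b(n) = ∫₀¹ A(x) B(x) dx, and |Σ_{n∈ℤ} a(n) b(n) − ∫₀¹ Ĩ_{𝒬,δ}(x) A(x) B(x) dx| ≤ (∫₀¹ |1 − Ĩ_{𝒬,δ}(x)|² dx)^{1/2} · (sup_{x∈[0,1]} |A(x)|) · (Σ_{m∈ℤ} |b(m)|²)^{1/2}. -/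

import Mathlib

/-
Expanding `A(x)B(x)` and integrating term by term, the orthogonality relation
`∫₀¹ e(nx) e(-mx) dx = [n = m]` picks out the diagonal `∑ a(n)b(n)`; applied to the conjugate
coefficients of `B` it is Parseval's identity `∫₀¹ |B|² = ∑ |b(m)|²`. The error term is
`∫₀¹ (1 - Ĩ) A B`, which is at most `sup |A|` times `∫₀¹ |1 - Ĩ| |B|`, and Cauchy–Schwarz bounds
the latter by `‖1 - Ĩ‖₂ ‖B‖₂`. Here `Ĩ` is square integrable on `[0,1]` because there it is a
bounded finite sum of indicators: only numerators `|a| ≤ q(1+δ) + 1` contribute.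
-/

open MeasureTheory

/-- Jutila's approximant `Ĩ_{𝒬,δ}` to the indicator of `[0,1]`:
`Ĩ_{𝒬,δ}(x) = (1/(2δL)) ∑_{q ∈ 𝒬} ∑_{a ∈ ℤ, gcd(a,q)=1} 𝟙_{[a/q-δ, a/q+δ]}(x)`,
where `L = ∑_{q ∈ 𝒬} φ(q)`. -/
noncomputable def jutilaApprox (𝒬 : Finset ℕ) (δ : ℝ) (x : ℝ) : ℝ :=
  (2 * δ * ∑ q ∈ 𝒬, (Nat.totient q : ℝ))⁻¹ *
    ∑ q ∈ 𝒬, ∑' a : ℤ,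
      if Int.gcd a q = 1 then
        Set.indicator (Set.Icc ((a : ℝ) / q - δ) ((a : ℝ) / q + δ)) (fun _ => (1 : ℝ)) x
      else 0

/-- `e(θ) = e^{2πiθ}`. -/
noncomputable def e (θ : ℝ) : ℂ := Complex.exp (2 * Real.pi * Complex.I * θ)

open Set Function ComplexConjugate

@[fun_prop]
lemma continuous_e : Continuous e := by
  unfold e; fun_prop

lemma e_add (s t : ℝ) : e (s + t) = e s * e t := by
  rw [e, e, e, ← Complex.exp_add]; push_cast; ring_nf

lemma norm_e (t : ℝ) : ‖e t‖ = 1 := by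
  rw [e, show (2 * Real.pi * Complex.I * t : ℂ) = (2 * Real.pi * t : ℝ) * Complex.I by
    push_cast; ring]
  exact Complex.norm_exp_ofReal_mul_I _

lemma conj_e (t : ℝ) : conj (e t) = e (-t) := by
  rw [e, e, ← Complex.exp_conj]
  simp only [map_mul, Complex.conj_ofReal, Complex.conj_I, map_ofNat]
  push_cast; ring_nf

lemma integral_e_intCast_mul (k : ℤ) :
    ∫ x in (0:ℝ)..1, e (k * x) = if k = 0 then 1 else 0 := by
  have hexp : ∀ x : ℝ, e (k * x) = Complex.exp ((2 * Real.pi * Complex.I * k) * x) := by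
    intro x; rw [e]; push_cast; ring_nf
  simp only [hexp]
  split_ifs with hk
  · simp [hk]
  · have hc : (2 * Real.pi * Complex.I * k : ℂ) ≠ 0 := by
      simp [Real.pi_ne_zero, Complex.I_ne_zero, hk]
    rw [integral_exp_mul_complex hc, Complex.ofReal_one, mul_one,
      show (2 * Real.pi * Complex.I * k : ℂ) = k * (2 * Real.pi * Complex.I) by ring,
      Complex.exp_int_mul_two_pi_mul_I]
    simp

lemma integral_e_mul_e_neg (n m : ℤ) :
    ∫ x in (0:ℝ)..1, e (n * x) * e (-(m * x)) = if n = m then 1 else 0 := by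
  have hsub : ∀ x : ℝ, e (n * x) * e (-(m * x)) = e (((n - m : ℤ) : ℝ) * x) := by
    intro x; rw [← e_add]; push_cast; ring_nf
  simp only [hsub, integral_e_intCast_mul, sub_eq_zero]

lemma continuous_tsum_mul_e {c : ℤ → ℂ} (hc : Summable fun n => ‖c n‖) {f : ℤ → ℝ → ℝ}
    (hf : ∀ n, Continuous (f n)) : Continuous fun x => ∑' n, c n * e (f n x) :=
  continuous_tsum (fun n => continuous_const.mul (continuous_e.comp (hf n))) hc
    fun n x => by rw [norm_mul, norm_e, mul_one]

lemma integral_tsum_mul_e_mul_tsum_mul_e_neg {c d : ℤ → ℂ} (hc : (support c).Finite)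
    (hd : (support d).Finite) :
    ∫ x in (0:ℝ)..1, (∑' n, c n * e (n * x)) * (∑' m, d m * e (-(m * x))) =
      ∑' n, c n * d n := by
  classical
  set u := hc.toFinset ∪ hd.toFinset
  have hcu : support c ⊆ u := by simp [u]
  have hdu : support d ⊆ u := by simp [u]
  have hsum : ∀ {f : ℤ → ℂ}, support f ⊆ u → ∀ g : ℤ → ℂ, ∑' n, f n * g n = ∑ n ∈ u, f n * g n :=
    fun hf g => tsum_eq_sum' ((support_mul_subset_left _ _).trans hf)
  simp only [hsum hcu, hsum hdu, Finset.sum_mul_sum]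
  calc ∫ x in (0:ℝ)..1, ∑ n ∈ u, ∑ m ∈ u, c n * e (n * x) * (d m * e (-(m * x)))
      = ∑ n ∈ u, ∑ m ∈ u, c n * d m * ∫ x in (0:ℝ)..1, e (n * x) * e (-(m * x)) := by
        rw [intervalIntegral.integral_finsetSum fun n _ =>
          (continuous_finsetSum _ fun m _ => by fun_prop).intervalIntegrable 0 1]
        refine Finset.sum_congr rfl fun n _ => ?_
        rw [intervalIntegral.integral_finsetSum fun m _ =>
          (by fun_prop : Continuous _).intervalIntegrable 0 1]
        refine Finset.sum_congr rfl fun m _ => ?_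
        rw [← intervalIntegral.integral_const_mul]
        congr 1 with x
        ring
    _ = ∑ n ∈ u, c n * d n := by
        simp [integral_e_mul_e_neg]

lemma integral_norm_tsum_mul_e_neg_sq {d : ℤ → ℂ} (hd : (support d).Finite) :
    ∫ x in (0:ℝ)..1, ‖∑' m, d m * e (-(m * x))‖ ^ 2 = ∑' m, ‖d m‖ ^ 2 := by
  have hconj : (support fun n => conj (d n)).Finite := by simpa [support] using hd
  apply Complex.ofReal_injective
  rw [← intervalIntegral.integral_ofReal, Complex.ofReal_tsum]
  push_cast
  simp only [← Complex.conj_mul', Complex.conj_tsum, map_mul, conj_e, neg_neg]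
  exact integral_tsum_mul_e_mul_tsum_mul_e_neg hconj hd

lemma IsCompact.norm_le_biSup_norm {X E : Type*} [TopologicalSpace X] [SeminormedAddGroup E]
    {s : Set X} {f : X → E} (hs : IsCompact s) (hf : ContinuousOn f s) {x : X} (hx : x ∈ s) :
    ‖f x‖ ≤ ⨆ y ∈ s, ‖f y‖ := by
  have hbdd : BddAbove ((‖f ·‖) '' s) := hs.bddAbove_image hf.norm
  rw [← ciSup_subtype_fun (by rwa [image_eq_range] at hbdd)
    (by rw [Real.sSup_empty]; exact Real.iSup_nonneg fun _ => norm_nonneg _)]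
  exact le_ciSup_set hbdd hx

theorem norm_integral_mul_mul_le {α : Type*} [MeasurableSpace α] {μ : Measure α} {w A B : α → ℂ}
    {M : ℝ} (hw : MemLp w 2 μ) (hAM : ∀ᵐ x ∂μ, ‖A x‖ ≤ M) (hM : 0 ≤ M) (hB : MemLp B 2 μ) :
    ‖∫ x, w x * (A x * B x) ∂μ‖ ≤ √(∫ x, ‖w x‖ ^ 2 ∂μ) * M * √(∫ x, ‖B x‖ ^ 2 ∂μ) := by
  have hcs := integral_mul_norm_le_Lp_mul_Lq Real.HolderConjugate.two_two
    (by simpa using hw) (by simpa using hB)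
  simp only [Real.rpow_two, ← Real.sqrt_eq_rpow] at hcs
  calc ‖∫ x, w x * (A x * B x) ∂μ‖ ≤ ∫ x, ‖w x * (A x * B x)‖ ∂μ :=
        norm_integral_le_integral_norm _
    _ ≤ ∫ x, ‖w x‖ * ‖B x‖ * M ∂μ := by
        refine integral_mono_of_nonneg (.of_forall fun _ => norm_nonneg _)
          ((hw.norm.integrable_mul hB.norm).mul_const M) ?_
        filter_upwards [hAM] with x hx
        rw [norm_mul, norm_mul, mul_left_comm, mul_comm]
        exact mul_le_mul_of_nonneg_left hx (by positivity)
    _ = (∫ x, ‖w x‖ * ‖B x‖ ∂μ) * M := integral_mul_const _ _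
    _ ≤ √(∫ x, ‖w x‖ ^ 2 ∂μ) * M * √(∫ x, ‖B x‖ ^ 2 ∂μ) := by
        rw [mul_right_comm]; exact mul_le_mul_of_nonneg_right hcs hM

theorem norm_integral_mul_sub_integral_mul_mul_le {J : ℝ → ℝ} {A B : ℝ → ℂ}
    (hJ : MemLp J 2 (volume.restrict (Ioc 0 1))) (hA : Continuous A) (hB : Continuous B) :
    ‖(∫ x in (0:ℝ)..1, A x * B x) - ∫ x in (0:ℝ)..1, (J x : ℂ) * (A x * B x)‖ ≤
      √(∫ x in (0:ℝ)..1, |1 - J x| ^ 2) * (⨆ x ∈ Icc (0:ℝ) 1, ‖A x‖) *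
        √(∫ x in (0:ℝ)..1, ‖B x‖ ^ 2) := by
  have hbound : ∀ {F : ℝ → ℂ}, Continuous F →
      ∀ᵐ x ∂volume.restrict (Ioc 0 1), ‖F x‖ ≤ ⨆ y ∈ Icc (0:ℝ) 1, ‖F y‖ := fun hF =>
    ae_restrict_of_forall_mem measurableSet_Ioc fun x hx =>
      isCompact_Icc.norm_le_biSup_norm hF.continuousOn (Ioc_subset_Icc_self hx)
  have hB2 : MemLp B 2 (volume.restrict (Ioc 0 1)) :=
    (memLp_top_of_bound hB.aestronglyMeasurable _ (hbound hB)).mono_exponent le_top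
  have hw : MemLp (fun x => ((1 - J x : ℝ) : ℂ)) 2 (volume.restrict (Ioc 0 1)) :=
    ((memLp_const 1).sub hJ).ofReal
  have hAB : Continuous fun x => A x * B x := hA.mul hB
  have hJAB : IntervalIntegrable (fun x => (J x : ℂ) * (A x * B x)) volume 0 1 :=
    (intervalIntegrable_iff_integrableOn_Ioc_of_le zero_le_one).2 <|
      (hJ.integrable one_le_two).ofReal.mul_bdd hAB.aestronglyMeasurable (hbound hAB)
  have hdiff (x : ℝ) : A x * B x - (J x : ℂ) * (A x * B x) = ((1 - J x : ℝ) : ℂ) * (A x * B x) := by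
    push_cast; ring
  rw [← intervalIntegral.integral_sub (hAB.intervalIntegrable 0 1) hJAB]
  simp only [hdiff, intervalIntegral.integral_of_le zero_le_one]
  refine (norm_integral_mul_mul_le hw (hbound hA)
    (Real.iSup_nonneg fun _ => Real.iSup_nonneg fun _ => norm_nonneg _) hB2).trans_eq ?_
  simp only [Complex.norm_real, Real.norm_eq_abs]

noncomputable def jutilaTerm (q : ℕ) (δ : ℝ) (a : ℤ) (x : ℝ) : ℝ :=
  if Int.gcd a q = 1 then
    indicator (Icc ((a : ℝ) / q - δ) ((a : ℝ) / q + δ)) (fun _ => (1 : ℝ)) x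
  else 0

lemma measurable_jutilaTerm (q : ℕ) (δ : ℝ) (a : ℤ) : Measurable (jutilaTerm q δ a) := by
  unfold jutilaTerm
  split_ifs
  · exact measurable_const.indicator measurableSet_Icc
  · exact measurable_const

lemma abs_jutilaTerm_le_one (q : ℕ) (δ : ℝ) (a : ℤ) (x : ℝ) : |jutilaTerm q δ a x| ≤ 1 := by
  unfold jutilaTerm indicator
  split_ifs <;> norm_num

-- For `q = 0`, where `a / q = 0`, the coprime numerators are `±1`: hence the `+ 1`.
noncomputable def jutilaNumerators (q : ℕ) (δ : ℝ) : Finset ℤ :=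
  Finset.Icc (-(⌈q * (1 + δ)⌉ + 1)) (⌈q * (1 + δ)⌉ + 1)

lemma mem_jutilaNumerators_of_jutilaTerm_ne_zero {q : ℕ} {δ x : ℝ} {a : ℤ} (hx : x ∈ Icc 0 1)
    (h : jutilaTerm q δ a x ≠ 0) : a ∈ jutilaNumerators q δ := by
  have hgcd : Int.gcd a q = 1 := by
    by_contra hnot; simp [jutilaTerm, hnot] at h
  have hmem : x ∈ Icc ((a : ℝ) / q - δ) ((a : ℝ) / q + δ) := by
    by_contra hnot; simp [jutilaTerm, hnot] at h
  rw [jutilaNumerators, Finset.mem_Icc, ← abs_le]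
  rcases Nat.eq_zero_or_pos q with rfl | hq
  · rw [Nat.cast_zero, Int.gcd_zero_right] at hgcd
    simp [Int.abs_eq_natAbs, hgcd]
  · have hq' : (0 : ℝ) < q := by exact_mod_cast hq
    have hupper : (a : ℝ) ≤ q * (1 + δ) := by
      rw [← div_le_iff₀' hq']; linarith [hmem.1, hmem.2, hx.2]
    have hlower : -(q * (1 + δ)) ≤ (a : ℝ) := by
      rw [neg_le, ← div_le_iff₀' hq', neg_div]; linarith [hmem.1, hmem.2, hx.1]
    have hceil : |(a : ℝ)| ≤ ⌈q * (1 + δ)⌉ := (abs_le.2 ⟨hlower, hupper⟩).trans (Int.le_ceil _)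
    have : |a| ≤ ⌈q * (1 + δ)⌉ := by exact_mod_cast hceil
    omega

lemma jutilaApprox_eqOn_sum (𝒬 : Finset ℕ) (δ : ℝ) :
    EqOn (jutilaApprox 𝒬 δ) (fun x => (2 * δ * ∑ q ∈ 𝒬, (Nat.totient q : ℝ))⁻¹ *
      ∑ q ∈ 𝒬, ∑ a ∈ jutilaNumerators q δ, jutilaTerm q δ a x) (Icc 0 1) := by
  intro x hx
  rw [jutilaApprox]
  congr 1
  refine Finset.sum_congr rfl fun q _ => tsum_eq_sum fun a ha => ?_
  by_contra h
  exact ha (mem_jutilaNumerators_of_jutilaTerm_ne_zero hx h)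

lemma memLp_jutilaApprox (𝒬 : Finset ℕ) (δ : ℝ) (p : ENNReal) :
    MemLp (jutilaApprox 𝒬 δ) p (volume.restrict (Icc 0 1)) := by
  set c := (2 * δ * ∑ q ∈ 𝒬, (Nat.totient q : ℝ))⁻¹
  have hmeas : Measurable fun x => c * ∑ q ∈ 𝒬, ∑ a ∈ jutilaNumerators q δ, jutilaTerm q δ a x :=
    measurable_const.mul <| Finset.measurable_sum _ fun q _ =>
      Finset.measurable_sum _ fun a _ => measurable_jutilaTerm q δ a
  have hbound (x : ℝ) : ‖c * ∑ q ∈ 𝒬, ∑ a ∈ jutilaNumerators q δ, jutilaTerm q δ a x‖ ≤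
      |c| * ∑ q ∈ 𝒬, ((jutilaNumerators q δ).card : ℝ) := by
    rw [Real.norm_eq_abs, abs_mul]
    refine mul_le_mul_of_nonneg_left ?_ (abs_nonneg c)
    refine (Finset.abs_sum_le_sum_abs _ _).trans (Finset.sum_le_sum fun q _ => ?_)
    refine (Finset.abs_sum_le_sum_abs _ _).trans ?_
    simpa using Finset.sum_le_sum fun a _ => abs_jutilaTerm_le_one q δ a x
  refine ((memLp_top_of_bound hmeas.aestronglyMeasurable _ (.of_forall hbound)).mono_exponent
    le_top).ae_eq <| Filter.EventuallyEq.symm ?_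
  exact ae_restrict_of_forall_mem measurableSet_Icc (jutilaApprox_eqOn_sum 𝒬 δ)

theorem jutila_diagonal_detection
    (a b : ℤ → ℂ) (ha : (Function.support a).Finite) (hb : (Function.support b).Finite)
    (𝒬 : Finset ℕ)
    (δ : ℝ) :
    (∑' n : ℤ, a n * b n) =
      (∫ x in (0:ℝ)..1,
        (∑' n : ℤ, a n * e (n * x)) * (∑' m : ℤ, b m * e (-(m * x)))) ∧
    ‖(∑' n : ℤ, a n * b n) -
        ∫ x in (0:ℝ)..1, (jutilaApprox 𝒬 δ x : ℂ) *
          ((∑' n : ℤ, a n * e (n * x)) * (∑' m : ℤ, b m * e (-(m * x))))‖ ≤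
      Real.sqrt (∫ x in (0:ℝ)..1, |1 - jutilaApprox 𝒬 δ x| ^ 2) *
        (⨆ x ∈ Set.Icc (0:ℝ) 1, ‖∑' n : ℤ, a n * e (n * x)‖) *
        Real.sqrt (∑' m : ℤ, ‖b m‖ ^ 2) := by
  have hdiag := integral_tsum_mul_e_mul_tsum_mul_e_neg ha hb
  have hsummable {c : ℤ → ℂ} (hc : (support c).Finite) : Summable fun n => ‖c n‖ :=
    summable_of_hasFiniteSupport (by simpa [HasFiniteSupport, support] using hc)
  refine ⟨hdiag.symm, ?_⟩
  rw [← hdiag, ← integral_norm_tsum_mul_e_neg_sq hb]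
  exact norm_integral_mul_sub_integral_mul_mul_le
    ((memLp_jutilaApprox 𝒬 δ 2).mono_measure (Measure.restrict_mono Ioc_subset_Icc_self le_rfl))
    (continuous_tsum_mul_e (hsummable ha) fun n => by fun_prop)
    (continuous_tsum_mul_e (hsummable hb) fun m => by fun_prop)
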